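/- arXiv:1606.04048 — 2 statements merged into one kernel-verified Lean document; each statement's English description precedes it below -/
import Mathlib

section
/- Let m ≥ 3 and d ≥ 1 be integers with γ = gcd(m,d), d₁ = d/γ, m₁ = m/γ, and give both variables y₁, y₂ weight d₁. For an integer k with 1 ≤ k ≤ d, the space of weighted homogeneous polynomials in ℂ[y₁,y₂] of weighted degree d₁(m−2) − k·m₁ is nonzero if and only if k = k₁·d₁ for some integer k₁ with 1 ≤ k₁ ≤ γ−1 and k₁·m₁ ≤ m−2. -/
/-!
A monomial `y₁^a y₂^b` has weighted degree `d₁(a+b)`, so the space is nonzero exactly when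
`d₁ s = d₁(m−2) − k m₁` has a solution `s ≥ 0`. Since `m₁` and `d₁` are coprime, this forces
`d₁ ∣ k`, say `k = k₁ d₁`, and then `s = m − 2 − k₁ m₁`. The bound `k ≤ d = γ d₁` gives `k₁ ≤ γ`,
and `k₁ = γ` is excluded because `γ m₁ = m > m − 2`.
-/

open MvPolynomial

theorem MvPolynomial.span_monomials_fin_two_ne_bot_iff {R : Type*} [CommSemiring R]
    [Nontrivial R] (P : ℕ → ℕ → Prop) :
    Submodule.span R {p : MvPolynomial (Fin 2) R | ∃ a b : ℕ, P a b ∧ p = X 0 ^ a * X 1 ^ b} ≠ ⊥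
      ↔ ∃ a b : ℕ, P a b := by
  simp only [Ne, Submodule.span_eq_bot, not_forall, exists_prop]
  constructor
  · rintro ⟨-, ⟨a, b, hab, rfl⟩, -⟩
    exact ⟨a, b, hab⟩
  · rintro ⟨a, b, hab⟩
    refine ⟨_, ⟨a, b, hab, rfl⟩, ?_⟩
    rw [X_pow_eq_monomial, X_pow_eq_monomial, monomial_mul, one_mul]
    exact monomial_eq_zero.not.mpr one_ne_zero

theorem Int.exists_nat_mul_eq_mul_sub_mul_iff {d₁ m₁ k : ℕ} (hcop : m₁.Coprime d₁)
    (hd₁ : 0 < d₁) (n : ℤ) :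
    (∃ s : ℕ, (d₁ : ℤ) * s = d₁ * n - k * m₁) ↔ ∃ k₁ : ℕ, (k₁ * m₁ : ℤ) ≤ n ∧ k = k₁ * d₁ := by
  constructor
  · rintro ⟨s, hs⟩
    have hdvd : d₁ ∣ k * m₁ := Int.natCast_dvd_natCast.mp ⟨n - s, by push_cast; linarith⟩
    obtain ⟨k₁, rfl⟩ := hcop.symm.dvd_of_dvd_mul_right hdvd
    have hs' : (s : ℤ) = n - k₁ * m₁ := by
      apply mul_left_cancel₀ (Int.natCast_ne_zero.mpr hd₁.ne')
      push_cast at hs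
      linarith
    exact ⟨k₁, by omega, mul_comm _ _⟩
  · rintro ⟨k₁, hle, rfl⟩
    refine ⟨(n - k₁ * m₁).toNat, ?_⟩
    rw [Int.toNat_of_nonneg (by linarith)]
    push_cast
    ring

theorem exists_mul_le_sub_two_iff {m d₁ m₁ γ k : ℕ} (hm : 2 ≤ m) (hm₁ : m₁ * γ = m)
    (hk : 1 ≤ k) (hk' : k ≤ d₁ * γ) :
    (∃ k₁ : ℕ, (k₁ * m₁ : ℤ) ≤ (m : ℤ) - 2 ∧ k = k₁ * d₁)
      ↔ ∃ k₁ : ℕ, 1 ≤ k₁ ∧ k₁ ≤ γ - 1 ∧ k₁ * m₁ ≤ m - 2 ∧ k = k₁ * d₁ := by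
  constructor
  · rintro ⟨k₁, hle, rfl⟩
    have hd₁ : 0 < d₁ := Nat.pos_of_mul_pos_left (by omega : 0 < k₁ * d₁)
    have hk₁ : 1 ≤ k₁ := Nat.pos_of_mul_pos_right (by omega : 0 < k₁ * d₁)
    have hk₁γ : k₁ ≤ γ := Nat.le_of_mul_le_mul_right (hk'.trans_eq (mul_comm _ _)) hd₁
    have hk₁m : k₁ * m₁ ≤ m - 2 := by omega
    have hk₁_ne : k₁ ≠ γ := by
      rintro rfl
      rw [mul_comm] at hm₁
      omega
    exact ⟨k₁, hk₁, by omega, hk₁m, rfl⟩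
  · rintro ⟨k₁, -, -, hle, rfl⟩
    exact ⟨k₁, by omega, rfl⟩

theorem weighted_homog_suspension_td_general (m d k : ℕ) (hm : 3 ≤ m)
    (hk : 1 ≤ k) (hk' : k ≤ d) :
    Submodule.span ℂ {p : MvPolynomial (Fin 2) ℂ |
        ∃ a b : ℕ, ((d / Nat.gcd m d : ℕ) : ℤ) * ((a : ℤ) + b)
          = ((d / Nat.gcd m d : ℕ) : ℤ) * ((m : ℤ) - 2) - (k : ℤ) * (m / Nat.gcd m d : ℕ)
        ∧ p = X 0 ^ a * X 1 ^ b} ≠ ⊥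
      ↔ ∃ k₁ : ℕ, 1 ≤ k₁ ∧ k₁ ≤ Nat.gcd m d - 1 ∧ k₁ * (m / Nat.gcd m d) ≤ m - 2
          ∧ k = k₁ * (d / Nat.gcd m d) := by
  set γ := Nat.gcd m d
  set d₁ := d / γ
  set m₁ := m / γ
  have hγ : 0 < γ := Nat.gcd_pos_of_pos_right m (by omega)
  have hd : d₁ * γ = d := Nat.div_mul_cancel (Nat.gcd_dvd_right m d)
  have hm₁ : m₁ * γ = m := Nat.div_mul_cancel (Nat.gcd_dvd_left m d)
  have hd₁ : 0 < d₁ := Nat.div_pos (Nat.gcd_le_right m (by omega)) hγ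
  have hsum (P : ℤ → Prop) : (∃ a b : ℕ, P (a + b)) ↔ ∃ s : ℕ, P s :=
    ⟨fun ⟨a, b, h⟩ => ⟨a + b, by exact_mod_cast h⟩, fun ⟨s, h⟩ => ⟨s, 0, by simpa using h⟩⟩
  exact (span_monomials_fin_two_ne_bot_iff _).trans <|
    (hsum fun t => (d₁ : ℤ) * t = d₁ * ((m : ℤ) - 2) - k * m₁).trans <|
    (Int.exists_nat_mul_eq_mul_sub_mul_iff (Nat.coprime_div_gcd_div_gcd hγ) hd₁ _).trans
      (exists_mul_le_sub_two_iff (by omega) hm₁ hk (hk'.trans_eq hd.symm))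

/-- With both variables of weight `d₁ = d / gcd(m,d)`, for `1 ≤ k ≤ d` the space of
weighted homogeneous polynomials of weighted degree `d₁(m−2) − k·m₁` is nonzero iff
`k = k₁·d₁` for some `1 ≤ k₁ ≤ γ − 1` with `k₁·m₁ ≤ m − 2`. -/
theorem weighted_homog_suspension_td (m d k : ℕ) (hm : 3 ≤ m) (hd : 1 ≤ d)
    (hk : 1 ≤ k) (hk' : k ≤ d) :
    Submodule.span ℂ {p : MvPolynomial (Fin 2) ℂ |
        ∃ a b : ℕ, ((d / Nat.gcd m d : ℕ) : ℤ) * ((a : ℤ) + b)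
          = ((d / Nat.gcd m d : ℕ) : ℤ) * ((m : ℤ) - 2) - (k : ℤ) * (m / Nat.gcd m d : ℕ)
        ∧ p = X 0 ^ a * X 1 ^ b} ≠ ⊥
      ↔ ∃ k₁ : ℕ, 1 ≤ k₁ ∧ k₁ ≤ Nat.gcd m d - 1 ∧ k₁ * (m / Nat.gcd m d) ≤ m - 2
          ∧ k = k₁ * (d / Nat.gcd m d) :=
  weighted_homog_suspension_td_general m d k hm hk hk'
end

section
/- Let b₁,…,b_r be distinct points of ℂⁿ, let a₁,…,a_r be positive integers, and let N ≥ a₁ + ⋯ + a_r − 1. Then the evaluation (jet) map from the space of polynomials in ℂ[x₁,…,xₙ] of degree ≤ N to the direct sum ⊕ᵢ ℂ[x]/𝔪_{bᵢ}^{aᵢ}, sending a polynomial h to the tuple of its residue classes modulo the powers 𝔪_{bᵢ}^{aᵢ} of the maximal ideals at the points bᵢ, is surjective. -/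
/-!
Write `𝔪_c` for `pointIdeal c`, the ideal generated by the `X j - C (c j)`. For `i ≠ j` pick a
coordinate `k` with `b i k ≠ b j k`; then `Q i = ∏_{j ≠ i} (X k - C (b j k)) ^ a j` has degree
`Σ_{j ≠ i} a j`, lies in `𝔪_{b j} ^ a j` for every `j ≠ i`, and is a unit modulo `𝔪_{b i} ^ a i`
because it does not vanish at `b i` and `𝔪_{b i}` is maximal. Every class modulo `𝔪_c ^ a` has a
representative of degree `< a`, so we may choose `h i` of degree `< a i` with `h i * Q i ≡ f i`;
then `Σ i, h i * Q i` has degree `≤ Σ a - 1` and the prescribed jets.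
-/

open MvPolynomial Finset

namespace MvPolynomial

variable {σ R K : Type*}

section CommRing

variable [CommRing R]

noncomputable def pointIdeal (c : σ → R) : Ideal (MvPolynomial σ R) :=
  Ideal.span (Set.range fun j => X j - C (c j))

lemma X_sub_C_mem_pointIdeal (c : σ → R) (j : σ) : X j - C (c j) ∈ pointIdeal c :=
  Ideal.subset_span ⟨j, rfl⟩

lemma totalDegree_X_sub_C_le (j : σ) (r : R) : (X j - C r : MvPolynomial σ R).totalDegree ≤ 1 :=
  (totalDegree_sub_C_le _ _).trans <| (totalDegree_monomial_le _ _).trans (by simp)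

lemma sub_C_eval_mem_pointIdeal (c : σ → R) (p : MvPolynomial σ R) :
    p - C (eval c p) ∈ pointIdeal c := by
  induction p using MvPolynomial.induction_on with
  | C d => simp
  | add p q hp hq => simpa [add_sub_add_comm] using add_mem hp hq
  | mul_X p j hp =>
    have : p * X j - C (eval c (p * X j)) =
        p * (X j - C (c j)) + (p - C (eval c p)) * C (c j) := by
      simp only [map_mul, eval_X]; ring
    rw [this]
    exact add_mem (Ideal.mul_mem_left _ _ (X_sub_C_mem_pointIdeal c j))
      (Ideal.mul_mem_right _ _ hp)

lemma pointIdeal_eq_ker_eval (c : σ → R) : pointIdeal c = RingHom.ker (eval c) := by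
  refine le_antisymm (Ideal.span_le.mpr ?_) fun p hp => ?_
  · rintro _ ⟨j, rfl⟩
    simp
  · simpa [RingHom.mem_ker.mp hp] using sub_C_eval_mem_pointIdeal c p

lemma exists_totalDegree_le_sub_mem_pointIdeal_pow_succ (c : σ → R) (a : ℕ)
    (p : MvPolynomial σ R) :
    ∃ g : MvPolynomial σ R, g.totalDegree ≤ a ∧ p - g ∈ pointIdeal c ^ (a + 1) := by
  induction a generalizing p with
  | zero => exact ⟨C (eval c p), by simp, by simpa using sub_C_eval_mem_pointIdeal c p⟩
  | succ a ih =>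
    induction p using MvPolynomial.induction_on with
    | C d => exact ⟨C d, by simp, by simp⟩
    | add p q hp hq =>
      obtain ⟨g, hg, hpg⟩ := hp
      obtain ⟨g', hg', hqg'⟩ := hq
      exact ⟨g + g', (totalDegree_add _ _).trans (max_le hg hg'),
        by simpa [add_sub_add_comm] using add_mem hpg hqg'⟩
    | mul_X p j hp =>
      obtain ⟨g, hg, hpg⟩ := hp
      -- `g * X j = g * (X j - C (c j)) + C (c j) * g`, and modulo `𝔪_c ^ (a + 2)` the first term
      -- depends only on `g` modulo `𝔪_c ^ (a + 1)`, which has a representative of degree `≤ a`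
      obtain ⟨g', hg', hgg'⟩ := ih g
      refine ⟨g' * (X j - C (c j)) + C (c j) * g, ?_, ?_⟩
      · refine (totalDegree_add _ _).trans (max_le ?_ ?_)
        · exact (totalDegree_mul _ _).trans (add_le_add hg' (totalDegree_X_sub_C_le j (c j)))
        · exact (totalDegree_mul _ _).trans (by rw [totalDegree_C, zero_add]; exact hg)
      · have : p * X j - (g' * (X j - C (c j)) + C (c j) * g) =
            (g - g') * (X j - C (c j)) + (p - g) * X j := by ring
        rw [this, pow_succ]
        exact add_mem (Ideal.mul_mem_mul hgg' (X_sub_C_mem_pointIdeal c j))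
          (Ideal.mul_mem_right _ _ hpg)

lemma exists_totalDegree_le_mk_eq (c : σ → R) (a : ℕ)
    (x : MvPolynomial σ R ⧸ pointIdeal c ^ a) :
    ∃ g : MvPolynomial σ R, g.totalDegree ≤ a - 1 ∧ Ideal.Quotient.mk _ g = x := by
  obtain ⟨p, rfl⟩ := Ideal.Quotient.mk_surjective x
  cases a with
  | zero => exact ⟨0, by simp, Ideal.Quotient.eq.mpr (by simp)⟩
  | succ a =>
    obtain ⟨g, hg, hpg⟩ := exists_totalDegree_le_sub_mem_pointIdeal_pow_succ c a p
    exact ⟨g, hg, (Ideal.Quotient.mk_eq_mk_iff_sub_mem _ _).mpr hpg |>.symm⟩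

end CommRing

section IsDomain

variable [CommRing R] [IsDomain R]

lemma exists_eval_ne_zero_mem_pointIdeal_pow {x y : σ → R} (hxy : x ≠ y) (a : ℕ) :
    ∃ q : MvPolynomial σ R, q.totalDegree ≤ a ∧ eval x q ≠ 0 ∧ q ∈ pointIdeal y ^ a := by
  obtain ⟨k, hk⟩ := Function.ne_iff.mp hxy
  refine ⟨(X k - C (y k)) ^ a, ?_, ?_, Ideal.pow_mem_pow (X_sub_C_mem_pointIdeal y k) a⟩
  · exact (totalDegree_pow _ _).trans
      (by simpa using Nat.mul_le_mul_left a (totalDegree_X_sub_C_le k (y k)))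
  · simp only [map_pow, map_sub, eval_X, eval_C]
    exact pow_ne_zero a (sub_ne_zero.mpr hk)

lemma exists_eval_ne_zero_forall_mem_pointIdeal_pow {ι : Type*} (x : σ → R) (y : ι → σ → R)
    (a : ι → ℕ) (s : Finset ι) (hs : ∀ j ∈ s, y j ≠ x) :
    ∃ q : MvPolynomial σ R, q.totalDegree ≤ ∑ j ∈ s, a j ∧ eval x q ≠ 0 ∧
      ∀ j ∈ s, q ∈ pointIdeal (y j) ^ a j := by
  classical
  induction s using Finset.induction_on with
  | empty => exact ⟨1, by simp, by simp, by simp⟩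
  | insert j s hj ih =>
    obtain ⟨q, hq, hqx, hqy⟩ := ih fun i hi => hs i (mem_insert_of_mem hi)
    obtain ⟨q', hq', hq'x, hq'y⟩ :=
      exists_eval_ne_zero_mem_pointIdeal_pow (hs j (mem_insert_self j s)).symm (a j)
    refine ⟨q' * q, ?_, by simp [hqx, hq'x], fun i hi => ?_⟩
    · rw [sum_insert hj]
      exact (totalDegree_mul _ _).trans (add_le_add hq' hq)
    · rcases mem_insert.mp hi with rfl | hi
      · exact Ideal.mul_mem_right _ _ hq'y
      · exact Ideal.mul_mem_left _ _ (hqy i hi)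

end IsDomain

section Field

variable [Field K]

instance isMaximal_pointIdeal (c : σ → K) : (pointIdeal c).IsMaximal := by
  rw [pointIdeal_eq_ker_eval]
  exact RingHom.ker_isMaximal_of_surjective _ fun d => ⟨C d, eval_C d⟩

lemma isUnit_mk_pointIdeal_pow {c : σ → K} {q : MvPolynomial σ K} (hq : eval c q ≠ 0) (a : ℕ) :
    IsUnit (Ideal.Quotient.mk (pointIdeal c ^ a) q) :=
  Ideal.Quotient.isUnit_mk_pow_of_notMem _ (by rwa [pointIdeal_eq_ker_eval, RingHom.mem_ker])

lemma exists_totalDegree_le_mk_mul_eq {c : σ → K} {q : MvPolynomial σ K} (hq : eval c q ≠ 0)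
    {a : ℕ} (x : MvPolynomial σ K ⧸ pointIdeal c ^ a) :
    ∃ h : MvPolynomial σ K, h.totalDegree ≤ a - 1 ∧ Ideal.Quotient.mk _ (h * q) = x := by
  obtain ⟨u, hu⟩ := isUnit_mk_pointIdeal_pow hq a
  obtain ⟨h, hdeg, hh⟩ := exists_totalDegree_le_mk_eq c a (x * ↑u⁻¹)
  exact ⟨h, hdeg, by rw [map_mul, hh, ← hu, Units.inv_mul_cancel_right]⟩

end Field

end MvPolynomial

/-- Jet interpolation: given distinct points `b₁,…,b_r` of `ℂⁿ`, positive integers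
`a₁,…,a_r` and `N ≥ Σ aᵢ − 1`, the evaluation map from polynomials of degree `≤ N`
to `⊕ᵢ ℂ[x]/𝔪_{bᵢ}^{aᵢ}` is surjective. -/
theorem jet_evaluation_surjective (n r : ℕ) (b : Fin r → Fin n → ℂ)
    (hb : Function.Injective b) (a : Fin r → ℕ) (ha : ∀ i, 1 ≤ a i)
    (N : ℕ) (hN : (∑ i, a i) - 1 ≤ N)
    (f : ∀ i : Fin r, MvPolynomial (Fin n) ℂ ⧸
      (Ideal.span (Set.range fun j : Fin n => X j - C (b i j))) ^ (a i)) :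
    ∃ p : MvPolynomial (Fin n) ℂ, p.totalDegree ≤ N ∧
      ∀ i : Fin r, Ideal.Quotient.mk
        ((Ideal.span (Set.range fun j : Fin n => X j - C (b i j))) ^ (a i)) p = f i := by
  choose Q hQdeg hQb hQmem using fun i => exists_eval_ne_zero_forall_mem_pointIdeal_pow
    (b i) b a (univ.erase i) fun j hj => hb.ne (ne_of_mem_erase hj)
  choose h hhdeg hh using fun i => exists_totalDegree_le_mk_mul_eq (hQb i) (f i)
  refine ⟨∑ i, h i * Q i, totalDegree_finsetSum_le fun i _ => ?_, fun i => ?_⟩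
  · calc (h i * Q i).totalDegree ≤ (a i - 1) + ∑ j ∈ univ.erase i, a j :=
          (totalDegree_mul _ _).trans (add_le_add (hhdeg i) (hQdeg i))
      _ = (∑ j, a j) - 1 := by rw [← add_sum_erase _ _ (mem_univ i)]; have := ha i; omega
      _ ≤ N := hN
  · rw [map_sum, sum_eq_single i (fun j _ hji => ?_) (by simp)]
    · exact hh i
    · exact Ideal.Quotient.eq_zero_iff_mem.mpr
        (Ideal.mul_mem_left _ _ (hQmem j i (mem_erase.mpr ⟨hji.symm, mem_univ i⟩)))
end
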